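/- Let p ∈ [1,∞) with dual exponent q, and let U be an n×d real matrix such that ‖z‖_2 ≤ ‖Uz‖_p ≤ √d·‖z‖_2 for all z ∈ ℝ^d. Then: (i) |||U|||_p ≤ d^{1/p+1/2}; (ii) if p ≤ 2 then ‖z‖_q ≤ ‖Uz‖_p for all z ∈ ℝ^d; (iii) if p > 2 then ‖z‖_q ≤ d^{1/q−1/2}·‖Uz‖_p for all z ∈ ℝ^d. -/

import Mathlib

open scoped BigOperators

/-- The entrywise `p`-norm of a vector: `(∑ i, |v i| ^ p) ^ (1/p)`. -/
noncomputable def pnorm (p : ℝ) {n : ℕ} (v : Fin n → ℝ) : ℝ :=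
  (∑ i, |v i| ^ p) ^ (1 / p)

/-- The dual norm of the `p`-norm: the max-norm if `p = 1`, else the `p/(p-1)`-norm. -/
noncomputable def qnorm (p : ℝ) {n : ℕ} (v : Fin n → ℝ) : ℝ :=
  if p = 1 then ⨆ i, |v i| else pnorm (p / (p - 1)) v

/-- The entrywise `p`-norm of a matrix. -/
noncomputable def mpnorm (p : ℝ) {n d : ℕ} (M : Matrix (Fin n) (Fin d) ℝ) : ℝ :=
  (∑ i, ∑ j, |M i j| ^ p) ^ (1 / p)

/-- `U` is an `(α, β, p)`-well-conditioned basis for the column space of `A`. -/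
def IsWCB (p α β : ℝ) {n m d : ℕ} (A : Matrix (Fin n) (Fin m) ℝ)
    (U : Matrix (Fin n) (Fin d) ℝ) : Prop :=
  LinearMap.range U.mulVecLin = LinearMap.range A.mulVecLin ∧
  mpnorm p U ≤ α ∧
  ∀ z : Fin d → ℝ, qnorm p z ≤ β * pnorm p (U.mulVec z)

/-- `S : Ω → Matrix` is a random `n × n` diagonal sampling matrix with probabilities `pr`:
its diagonal entries are mutually independent, with `S ω i i = (pr i) ^ (-1/p)` with
probability `pr i` and `S ω i i = 0` with probability `1 - pr i`. -/
structure IsSamplingMatrix {Ω : Type} [MeasurableSpace Ω] (μ : MeasureTheory.Measure Ω)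
    (p : ℝ) {n : ℕ} (pr : Fin n → ℝ) (S : Ω → Matrix (Fin n) (Fin n) ℝ) : Prop where
  offdiag : ∀ ω i j, i ≠ j → S ω i j = 0
  meas : ∀ i, Measurable fun ω => S ω i i
  prob_val : ∀ i, μ {ω | S ω i i = (pr i) ^ (-(1 / p))} = ENNReal.ofReal (pr i)
  prob_zero : ∀ i, μ {ω | S ω i i = 0} = ENNReal.ofReal (1 - pr i)
  indep : ProbabilityTheory.iIndepFun (fun i ω => S ω i i) μ

/-! Testing the lower sandwich bound `‖z‖₂ ≤ ‖U z‖_p` against the comparison of `ℓ_q` with `ℓ₂`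
gives (ii) and (iii): for `q ≥ 2` one has `‖z‖_q ≤ ‖z‖₂`, and for `q ≤ 2` Hölder's inequality gives
`‖z‖_q ≤ d^(1/q - 1/2) ‖z‖₂`. Testing the upper bound on the basis vectors bounds the `p`-norm of
every column of `U` by `√d`, and summing the `p`-th powers of the `d` columns gives (i). -/

open Real

section PNorm

variable {m : ℕ} {p a b : ℝ}

lemma pnorm_nonneg (p : ℝ) (v : Fin m → ℝ) : 0 ≤ pnorm p v :=
  rpow_nonneg (Finset.sum_nonneg fun _ _ => rpow_nonneg (abs_nonneg _) _) _

lemma pnorm_rpow (hp : p ≠ 0) (v : Fin m → ℝ) : pnorm p v ^ p = ∑ i, |v i| ^ p := by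
  rw [pnorm, one_div, rpow_inv_rpow (Finset.sum_nonneg fun _ _ => rpow_nonneg (abs_nonneg _) _) hp]

lemma pnorm_single (hp : p ≠ 0) (j : Fin m) (x : ℝ) : pnorm p (Pi.single j x) = |x| := by
  have hsum : ∑ i, |(Pi.single j x : Fin m → ℝ) i| ^ p = ∑ i, Pi.single j (|x| ^ p) i :=
    Finset.sum_congr rfl fun i _ => by
      rcases eq_or_ne i j with rfl | hij
      · simp
      · simp [hij, zero_rpow hp]
  rw [pnorm, hsum, Finset.sum_pi_single', if_pos (Finset.mem_univ j), one_div,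
    rpow_rpow_inv (abs_nonneg x) hp]

lemma abs_le_pnorm (hp : 0 < p) (v : Fin m → ℝ) (i : Fin m) : |v i| ≤ pnorm p v := by
  rw [← rpow_le_rpow_iff (abs_nonneg _) (pnorm_nonneg p v) hp, pnorm_rpow hp.ne']
  exact Finset.single_le_sum (fun j _ => rpow_nonneg (abs_nonneg (v j)) p) (Finset.mem_univ i)

lemma pnorm_antitone (ha : 0 < a) (hab : a ≤ b) (v : Fin m → ℝ) : pnorm b v ≤ pnorm a v := by
  have hb : 0 < b := ha.trans_le hab
  set N := pnorm a v
  have hN : 0 ≤ N := pnorm_nonneg a v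
  -- each `|v i| ≤ N`, so the excess exponent `b - a` costs at most a factor `N ^ (b - a)`
  have hterm (i : Fin m) : |v i| ^ b ≤ |v i| ^ a * N ^ (b - a) := by
    calc |v i| ^ b = |v i| ^ a * |v i| ^ (b - a) := by
          rw [← rpow_add' (abs_nonneg _) (by linarith), add_sub_cancel]
      _ ≤ |v i| ^ a * N ^ (b - a) :=
          mul_le_mul_of_nonneg_left (rpow_le_rpow (abs_nonneg _) (abs_le_pnorm ha v i)
            (sub_nonneg.2 hab)) (rpow_nonneg (abs_nonneg _) _)
  rw [← rpow_le_rpow_iff (pnorm_nonneg b v) hN hb, pnorm_rpow hb.ne']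
  calc ∑ i, |v i| ^ b ≤ ∑ i, |v i| ^ a * N ^ (b - a) := Finset.sum_le_sum fun i _ => hterm i
    _ = N ^ a * N ^ (b - a) := by rw [← Finset.sum_mul, pnorm_rpow ha.ne']
    _ = N ^ b := by rw [← rpow_add' hN (by linarith), add_sub_cancel]

lemma pnorm_le_card_rpow_mul_pnorm (ha : 0 < a) (hab : a ≤ b) (v : Fin m → ℝ) :
    pnorm a v ≤ (m : ℝ) ^ (1 / a - 1 / b) * pnorm b v := by
  have hb : 0 < b := ha.trans_le hab
  have hm : (0 : ℝ) ≤ m := Nat.cast_nonneg m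
  have holder := rpow_sum_le_const_mul_sum_rpow_of_nonneg (s := Finset.univ)
    (f := fun i => |v i| ^ a) ((one_le_div ha).2 hab) fun i _ => rpow_nonneg (abs_nonneg (v i)) a
  simp only [Finset.card_univ, Fintype.card_fin, ← rpow_mul (abs_nonneg _),
    mul_div_cancel₀ b ha.ne'] at holder
  rw [← rpow_le_rpow_iff (pnorm_nonneg a v) (mul_nonneg (rpow_nonneg hm _) (pnorm_nonneg b v)) hb,
    mul_rpow (rpow_nonneg hm _) (pnorm_nonneg b v), pnorm_rpow hb.ne', ← rpow_mul hm,
    show pnorm a v ^ b = (pnorm a v ^ a) ^ (b / a) by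
      rw [← rpow_mul (pnorm_nonneg a v), mul_div_cancel₀ b ha.ne'],
    pnorm_rpow ha.ne']
  convert holder using 3
  field_simp

end PNorm

section QNorm

variable {m : ℕ} {p : ℝ}

lemma qnorm_one (v : Fin m → ℝ) : qnorm 1 v = ⨆ i, |v i| :=
  if_pos rfl

lemma qnorm_of_ne_one (hp : p ≠ 1) (v : Fin m → ℝ) : qnorm p v = pnorm (p / (p - 1)) v :=
  if_neg hp

lemma qnorm_le_pnorm_two (hp : 1 ≤ p) (hp2 : p ≤ 2) (v : Fin m → ℝ) : qnorm p v ≤ pnorm 2 v := by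
  rcases hp.eq_or_lt with rfl | hp1
  · rw [qnorm_one]
    exact Real.iSup_le (abs_le_pnorm two_pos v) (pnorm_nonneg 2 v)
  · rw [qnorm_of_ne_one hp1.ne']
    refine pnorm_antitone two_pos ?_ v
    rw [le_div_iff₀ (by linarith)]
    linarith

lemma qnorm_le_card_rpow_mul_pnorm_two (hp : 2 ≤ p) (v : Fin m → ℝ) :
    qnorm p v ≤ (m : ℝ) ^ ((1 - 1 / p) - 1 / 2) * pnorm 2 v := by
  have hp1 : 0 < p - 1 := by linarith
  rw [qnorm_of_ne_one (by linarith)]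
  convert pnorm_le_card_rpow_mul_pnorm (div_pos (by linarith) hp1) _ v using 3
  · field_simp
  · rw [div_le_iff₀ hp1]
    linarith

end QNorm

lemma mpnorm_le_card_rpow_mul_of_pnorm_col_le {n d : ℕ} {p c : ℝ} (hp : 0 < p) (hc : 0 ≤ c)
    (M : Matrix (Fin n) (Fin d) ℝ) (hcol : ∀ j, pnorm p (M.col j) ≤ c) :
    mpnorm p M ≤ (d : ℝ) ^ (1 / p) * c := by
  have hM : 0 ≤ ∑ i, ∑ j, |M i j| ^ p :=
    Finset.sum_nonneg fun _ _ => Finset.sum_nonneg fun _ _ => rpow_nonneg (abs_nonneg _) _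
  have hd : (0 : ℝ) ≤ d := Nat.cast_nonneg d
  rw [mpnorm, ← rpow_le_rpow_iff (rpow_nonneg hM _) (mul_nonneg (rpow_nonneg hd _) hc) hp,
    one_div, rpow_inv_rpow hM hp.ne', mul_rpow (rpow_nonneg hd _) hc, rpow_inv_rpow hd hp.ne',
    Finset.sum_comm]
  calc ∑ j, ∑ i, |M i j| ^ p = ∑ j, pnorm p (M.col j) ^ p :=
        Finset.sum_congr rfl fun j _ => (pnorm_rpow hp.ne' _).symm
    _ ≤ ∑ _j : Fin d, c ^ p :=
        Finset.sum_le_sum fun j _ => rpow_le_rpow (pnorm_nonneg p _) (hcol j) hp.le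
    _ = d * c ^ p := by simp

/-- **From the `ℓ₂` sandwich to well-conditioning.**
Let `p ∈ [1, ∞)` with dual exponent `q`, and let `U` be an `n × d` real matrix such that
`‖z‖₂ ≤ ‖U z‖_p ≤ √d · ‖z‖₂` for all `z`.  Then (i) `|||U|||_p ≤ d^(1/p + 1/2)`;
(ii) if `p ≤ 2` then `‖z‖_q ≤ ‖U z‖_p` for all `z`; (iii) if `p > 2` then
`‖z‖_q ≤ d^(1/q - 1/2) · ‖U z‖_p` for all `z` (where `1/q = 1 - 1/p`). -/
theorem sandwich_implies_wcb_bounds {n d : ℕ} (U : Matrix (Fin n) (Fin d) ℝ) (p : ℝ)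
    (hp : 1 ≤ p)
    (hU : ∀ z : Fin d → ℝ,
      pnorm 2 z ≤ pnorm p (U.mulVec z) ∧ pnorm p (U.mulVec z) ≤ Real.sqrt d * pnorm 2 z) :
    mpnorm p U ≤ (d : ℝ) ^ (1 / p + 1 / 2) ∧
    (p ≤ 2 → ∀ z : Fin d → ℝ, qnorm p z ≤ pnorm p (U.mulVec z)) ∧
    (2 < p → ∀ z : Fin d → ℝ,
      qnorm p z ≤ (d : ℝ) ^ ((1 - 1 / p) - 1 / 2) * pnorm p (U.mulVec z)) := by
  have hp0 : 0 < p := zero_lt_one.trans_le hp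
  have hcol (j : Fin d) : pnorm p (U.col j) ≤ √d := by
    have h := (hU (Pi.single j 1)).2
    rwa [Matrix.mulVec_single_one, pnorm_single two_ne_zero, abs_one, mul_one] at h
  refine ⟨?_, fun hp2 z => (qnorm_le_pnorm_two hp hp2 z).trans (hU z).1,
    fun hp2 z => (qnorm_le_card_rpow_mul_pnorm_two hp2.le z).trans
      (mul_le_mul_of_nonneg_left (hU z).1 (by positivity))⟩
  calc mpnorm p U ≤ (d : ℝ) ^ (1 / p) * √d :=
        mpnorm_le_card_rpow_mul_of_pnorm_col_le hp0 (sqrt_nonneg _) U hcol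
    _ = (d : ℝ) ^ (1 / p + 1 / 2) := by
        rw [sqrt_eq_rpow, ← rpow_add' (Nat.cast_nonneg d) (by positivity)]
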